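/- Let p̃ be (C, α)-multicalibrated, let δ ∈ (0,1] with m = 1/δ an integer, and let p̄_δ be the bucketed predictor with p̄_δ(x) = jδ whenever p̃(x) ∈ B_j. Then p̄_δ is (C, 2√(α/δ) + δ)-swap multicalibrated, and max_{x∈X} |p̃(x) − p̄_δ(x)| ≤ δ. -/

import Mathlib

open Finset

noncomputable section

open Classical in
/-- Real-valued indicator of a proposition. -/
noncomputable def ind (P : Prop) : ℝ := if P then 1 else 0

/-- The real value of a Boolean label. -/
def yval : Bool → ℝ := fun y => if y then 1 else 0

variable {X : Type*}

/-- Expectation under a joint distribution `μ` on `X × {0,1}` of `f(x,y)`. -/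
def Exp [Fintype X] (μ : X → Bool → ℝ) (f : X → Bool → ℝ) : ℝ :=
  ∑ x, ∑ y, μ x y * f x y

/-- `μ` is a probability distribution on `X × {0,1}`. -/
def IsProb [Fintype X] (μ : X → Bool → ℝ) : Prop :=
  (∀ x y, 0 ≤ μ x y) ∧ (∑ x, ∑ y, μ x y) = 1

/-- Probability of the level set `h(x) = v`. -/
def pmass [Fintype X] (μ : X → Bool → ℝ) (h : X → ℝ) (v : ℝ) : ℝ :=
  ∑ x, ∑ y, ind (h x = v) * μ x y

/-- Conditional expectation of `f(x,y)` given `h(x) = v` (the distribution `D|_v`). -/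
def CExp [Fintype X] (μ : X → Bool → ℝ) (h : X → ℝ) (v : ℝ) (f : X → Bool → ℝ) : ℝ :=
  (∑ x, ∑ y, ind (h x = v) * (μ x y * f x y)) / pmass μ h v

/-- Expectation of `g(v)` over `v ~ D_h`, the distribution of `h(x)`. -/
def VExp [Fintype X] (μ : X → Bool → ℝ) (h : X → ℝ) (g : ℝ → ℝ) : ℝ :=
  Exp μ (fun x _ => g (h x))

/-- The bucketed predictor value: with `δ = 1/m`, a value `t ∈ B_j = [(j−1)δ, jδ)`
(for `j < m`) is mapped to `jδ`, and `t ∈ B_m = [1−δ, 1]` is mapped to `mδ = 1`. -/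
def bucketed (m : ℕ) (t : ℝ) : ℝ :=
  if 1 - 1/(m:ℝ) ≤ t then 1 else ((⌊t * (m:ℝ)⌋ : ℝ) + 1) / (m:ℝ)

/-! On a level set `{p̄ = v}` split `y - v = (y - p̃(x)) + (p̃(x) - v)`. The second part is at
most `δ` since `p̄` is `δ`-close to `p̃`. The first part is a sum over the levels `u` of `p̃` lying
in the bucket, so its mass-weighted size is at most both the multicalibration error `α` and the
bucket mass `P(v)`, hence at most `√(α P(v))`. Summing over the at most `m = 1/δ` buckets, the
Cauchy–Schwarz bound `∑ √P(v) ≤ √m` gives `δ + √(α/δ)`. -/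

section LevelSets

variable [Fintype X] {μ : X → Bool → ℝ} {h : X → ℝ} {v : ℝ} {f g : X → Bool → ℝ}

def levelExp (μ : X → Bool → ℝ) (h : X → ℝ) (v : ℝ) (f : X → Bool → ℝ) : ℝ :=
  ∑ x, ∑ y, ind (h x = v) * (μ x y * f x y)

theorem CExp_eq_levelExp_div : CExp μ h v f = levelExp μ h v f / pmass μ h v := rfl

theorem levelExp_eq_sum_filter :
    levelExp μ h v f = ∑ x with h x = v, ∑ y, μ x y * f x y := by
  simp only [levelExp, ind, Finset.sum_filter, ← Finset.mul_sum]
  exact Finset.sum_congr rfl fun x _ => by split_ifs <;> simp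

theorem pmass_eq_levelExp_one : pmass μ h v = levelExp μ h v (fun _ _ => 1) := by
  simp only [pmass, levelExp, mul_one]

theorem pmass_eq_sum_filter : pmass μ h v = ∑ x with h x = v, ∑ y, μ x y := by
  simp only [pmass_eq_levelExp_one, levelExp_eq_sum_filter, mul_one]

theorem pmass_nonneg (hμ : ∀ x y, 0 ≤ μ x y) : 0 ≤ pmass μ h v := by
  rw [pmass_eq_sum_filter]
  exact Finset.sum_nonneg fun x _ => Finset.sum_nonneg fun y _ => hμ x y

theorem levelExp_congr (hfg : ∀ x y, h x = v → f x y = g x y) :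
    levelExp μ h v f = levelExp μ h v g := by
  simp only [levelExp_eq_sum_filter]
  exact Finset.sum_congr rfl fun x hx => Finset.sum_congr rfl fun y _ => by
    rw [hfg x y (Finset.mem_filter.mp hx).2]

theorem levelExp_add :
    levelExp μ h v (fun x y => f x y + g x y) = levelExp μ h v f + levelExp μ h v g := by
  simp only [levelExp, mul_add, Finset.sum_add_distrib]

theorem abs_levelExp_le (hμ : ∀ x y, 0 ≤ μ x y) {B : ℝ} (hB : ∀ x y, h x = v → |f x y| ≤ B) :
    |levelExp μ h v f| ≤ B * pmass μ h v := by
  rw [levelExp_eq_sum_filter, pmass_eq_sum_filter, Finset.mul_sum]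
  refine (Finset.abs_sum_le_sum_abs _ _).trans (Finset.sum_le_sum fun x hx => ?_)
  rw [Finset.mul_sum]
  refine (Finset.abs_sum_le_sum_abs _ _).trans (Finset.sum_le_sum fun y _ => ?_)
  rw [abs_mul, abs_of_nonneg (hμ x y), mul_comm B]
  exact mul_le_mul_of_nonneg_left (hB x y (Finset.mem_filter.mp hx).2) (hμ x y)

theorem pmass_mul_CExp (hμ : ∀ x y, 0 ≤ μ x y) :
    pmass μ h v * CExp μ h v f = levelExp μ h v f := by
  rcases (pmass_nonneg (h := h) (v := v) hμ).eq_or_lt with hP | hP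
  · have hnull : ∀ x, h x = v → ∀ y, μ x y = 0 := by
      intro x hx y
      rw [eq_comm, pmass_eq_sum_filter, Finset.sum_eq_zero_iff_of_nonneg fun x _ =>
        Finset.sum_nonneg fun y _ => hμ x y] at hP
      exact (Finset.sum_eq_zero_iff_of_nonneg fun y _ => hμ x y).mp
        (hP x (Finset.mem_filter.mpr ⟨Finset.mem_univ x, hx⟩)) y (Finset.mem_univ y)
    rw [← hP, zero_mul, levelExp_eq_sum_filter]
    exact (Finset.sum_eq_zero fun x hx => Finset.sum_eq_zero fun y _ => by
      rw [hnull x (Finset.mem_filter.mp hx).2 y, zero_mul]).symm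
  · rw [CExp_eq_levelExp_div, mul_div_cancel₀ _ hP.ne']

theorem pmass_mul_abs_CExp (hμ : ∀ x y, 0 ≤ μ x y) :
    pmass μ h v * |CExp μ h v f| = |levelExp μ h v f| := by
  rw [← pmass_mul_CExp hμ, abs_mul, abs_of_nonneg (pmass_nonneg hμ)]

theorem levelExp_comp (pt : X → ℝ) (φ : ℝ → ℝ) :
    levelExp μ (fun x => φ (pt x)) v f =
      ∑ u ∈ (univ.image pt).filter (φ · = v), levelExp μ pt u f := by
  simp only [levelExp_eq_sum_filter]
  rw [← Finset.sum_fiberwise_of_maps_to (t := (univ.image pt).filter (φ · = v)) (g := pt)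
    fun x hx => Finset.mem_filter.mpr
      ⟨Finset.mem_image_of_mem pt (Finset.mem_univ x), (Finset.mem_filter.mp hx).2⟩]
  refine Finset.sum_congr rfl fun u hu => ?_
  rw [Finset.filter_filter]
  refine Finset.sum_congr (Finset.filter_congr fun x _ => ?_) fun _ _ => rfl
  constructor
  · exact And.right
  · rintro rfl; exact ⟨(Finset.mem_filter.mp hu).2, rfl⟩

theorem VExp_eq_sum_image (g : ℝ → ℝ) :
    VExp μ h g = ∑ v ∈ univ.image h, pmass μ h v * g v := by
  simp only [VExp, Exp, pmass_eq_sum_filter, Finset.sum_mul]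
  rw [← Finset.sum_fiberwise_of_maps_to (t := univ.image h) (g := h)
    fun x _ => Finset.mem_image_of_mem h (Finset.mem_univ x)]
  refine Finset.sum_congr rfl fun v _ => Finset.sum_congr rfl fun x hx => ?_
  rw [(Finset.mem_filter.mp hx).2]

theorem VExp_nonneg (hμ : ∀ x y, 0 ≤ μ x y) {g : ℝ → ℝ} (hg : ∀ v, 0 ≤ g v) :
    0 ≤ VExp μ h g :=
  Finset.sum_nonneg fun x _ => Finset.sum_nonneg fun y _ => mul_nonneg (hμ x y) (hg _)

theorem sum_pmass_image (hμ : IsProb μ) :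
    ∑ v ∈ univ.image h, pmass μ h v = 1 := by
  have h1 := VExp_eq_sum_image (μ := μ) (h := h) fun _ => 1
  simp only [VExp, Exp, mul_one] at h1
  rw [← h1, hμ.2]

end LevelSets

theorem abs_yval_sub_le_one (y : Bool) {t : ℝ} (ht : t ∈ Set.Icc (0:ℝ) 1) :
    |yval y - t| ≤ 1 := by
  rw [abs_le]
  cases y <;> simp only [yval, Bool.false_eq_true, if_true, if_false] <;> constructor <;>
    linarith [ht.1, ht.2]

theorem min_le_sqrt_mul {a b : ℝ} (ha : 0 ≤ a) (hb : 0 ≤ b) : min a b ≤ √(a * b) :=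
  Real.le_sqrt_of_sq_le <| (sq (min a b)).trans_le <|
    mul_le_mul (min_le_left a b) (min_le_right a b) (le_min ha hb) ha

section Coarsening

variable [Fintype X] {μ : X → Bool → ℝ} {pt : X → ℝ} {φ : ℝ → ℝ} {δ : ℝ}

theorem abs_levelExp_comp_le (hμ : ∀ x y, 0 ≤ μ x y) (v : ℝ) (f : X → Bool → ℝ) :
    |levelExp μ (fun x => φ (pt x)) v f| ≤ VExp μ pt (fun u => |CExp μ pt u f|) := by
  rw [levelExp_comp, VExp_eq_sum_image]
  calc |∑ u ∈ (univ.image pt).filter (φ · = v), levelExp μ pt u f|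
      ≤ ∑ u ∈ (univ.image pt).filter (φ · = v), |levelExp μ pt u f| :=
        Finset.abs_sum_le_sum_abs _ _
    _ = ∑ u ∈ (univ.image pt).filter (φ · = v), pmass μ pt u * |CExp μ pt u f| :=
        Finset.sum_congr rfl fun u _ => (pmass_mul_abs_CExp hμ).symm
    _ ≤ ∑ u ∈ univ.image pt, pmass μ pt u * |CExp μ pt u f| :=
        Finset.sum_le_sum_of_subset_of_nonneg (Finset.filter_subset _ _) fun u _ _ =>
          mul_nonneg (pmass_nonneg hμ) (abs_nonneg _)

theorem abs_levelExp_coarsening_le (hμ : ∀ x y, 0 ≤ μ x y)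
    (hrange : ∀ x, pt x ∈ Set.Icc (0:ℝ) 1) (hφ : ∀ x, |pt x - φ (pt x)| ≤ δ)
    {c : X → ℝ} (hc : ∀ x, |c x| ≤ 1) (v : ℝ) :
    |levelExp μ (fun x => φ (pt x)) v (fun x y => c x * (yval y - v))| ≤
      δ * pmass μ (fun x => φ (pt x)) v +
        min (VExp μ pt (fun u => |CExp μ pt u (fun x y => c x * (yval y - u))|))
          (pmass μ (fun x => φ (pt x)) v) := by
  have hsplit : levelExp μ (fun x => φ (pt x)) v (fun x y => c x * (yval y - v)) =
      levelExp μ (fun x => φ (pt x)) v (fun x y => c x * (pt x - v)) +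
        levelExp μ (fun x => φ (pt x)) v (fun x y => c x * (yval y - pt x)) := by
    rw [← levelExp_add]
    exact levelExp_congr fun x y _ => by ring
  have hclose : |levelExp μ (fun x => φ (pt x)) v (fun x y => c x * (pt x - v))| ≤
      δ * pmass μ (fun x => φ (pt x)) v :=
    abs_levelExp_le hμ fun x y hx => by
      rw [abs_mul, ← hx]
      exact (mul_le_of_le_one_left (abs_nonneg _) (hc x)).trans (hφ x)
  have hcal : |levelExp μ (fun x => φ (pt x)) v (fun x y => c x * (yval y - pt x))| ≤
      VExp μ pt (fun u => |CExp μ pt u (fun x y => c x * (yval y - u))|) := by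
    refine (abs_levelExp_comp_le hμ v _).trans_eq ?_
    congr 1
    funext u
    rw [CExp_eq_levelExp_div, CExp_eq_levelExp_div, levelExp_congr fun x y hx => by rw [hx]]
  have hunit : |levelExp μ (fun x => φ (pt x)) v (fun x y => c x * (yval y - pt x))| ≤
      pmass μ (fun x => φ (pt x)) v := by
    simpa using abs_levelExp_le hμ (B := 1) fun x y _ => by
      rw [abs_mul]
      exact mul_le_one₀ (hc x) (abs_nonneg _) (abs_yval_sub_le_one y (hrange x))
  rw [hsplit]
  exact (abs_add_le _ _).trans (add_le_add hclose (le_min hcal hunit))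

variable {α : ℝ} {C : Finset (X → ℝ)} (hC : C.Nonempty)

theorem pmass_mul_sup'_le (hμ : ∀ x y, 0 ≤ μ x y)
    (hrange : ∀ x, pt x ∈ Set.Icc (0:ℝ) 1) (hφ : ∀ x, |pt x - φ (pt x)| ≤ δ)
    (hbdd : ∀ c ∈ C, ∀ x, |c x| ≤ 1) (hα : 0 ≤ α)
    (hmc : ∀ c ∈ C, VExp μ pt (fun u => |CExp μ pt u (fun x y => c x * (yval y - u))|) ≤ α)
    (v : ℝ) :
    pmass μ (fun x => φ (pt x)) v *
        C.sup' hC (fun c => |CExp μ (fun x => φ (pt x)) v (fun x y => c x * (yval y - v))|) ≤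
      δ * pmass μ (fun x => φ (pt x)) v + √α * √(pmass μ (fun x => φ (pt x)) v) := by
  obtain ⟨c, hc, hsup⟩ := Finset.exists_mem_eq_sup' hC
    fun c => |CExp μ (fun x => φ (pt x)) v (fun x y => c x * (yval y - v))|
  rw [hsup, pmass_mul_abs_CExp hμ, ← Real.sqrt_mul hα]
  refine (abs_levelExp_coarsening_le hμ hrange hφ (hbdd c hc) v).trans (add_le_add_right ?_ _)
  exact (min_le_min_right _ (hmc c hc)).trans (min_le_sqrt_mul hα (pmass_nonneg hμ))

theorem sum_sqrt_pmass_le (hμ : IsProb μ) {k : ℕ} (hk : (univ.image h).card ≤ k) :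
    ∑ v ∈ univ.image h, √(pmass μ h v) ≤ √k := by
  have hCS := Real.sum_sqrt_mul_sqrt_le (univ.image h) (f := fun _ => 1) (g := pmass μ h)
    (fun _ => zero_le_one) (fun _ => pmass_nonneg hμ.1)
  simp only [Real.sqrt_one, one_mul, Finset.sum_const, nsmul_eq_mul, mul_one,
    sum_pmass_image hμ] at hCS
  exact hCS.trans (Real.sqrt_le_sqrt (by exact_mod_cast hk))

theorem swapMC_of_coarsening (hμ : IsProb μ)
    (hrange : ∀ x, pt x ∈ Set.Icc (0:ℝ) 1) (hφ : ∀ x, |pt x - φ (pt x)| ≤ δ)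
    (hbdd : ∀ c ∈ C, ∀ x, |c x| ≤ 1)
    (hmc : C.sup' hC (fun c => VExp μ pt (fun v =>
      |CExp μ pt v (fun x y => c x * (yval y - v))|)) ≤ α)
    {k : ℕ} (hk : (univ.image fun x => φ (pt x)).card ≤ k) :
    VExp μ (fun x => φ (pt x)) (fun v => C.sup' hC (fun c =>
        |CExp μ (fun x => φ (pt x)) v (fun x y => c x * (yval y - v))|)) ≤ δ + √(α * k) := by
  have hmc' := (Finset.sup'_le_iff hC _).mp hmc
  have hα : 0 ≤ α := by
    obtain ⟨c, hc⟩ := hC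
    exact (VExp_nonneg hμ.1 fun _ => abs_nonneg _).trans (hmc' c hc)
  rw [VExp_eq_sum_image, Real.sqrt_mul hα]
  calc _ ≤ ∑ v ∈ univ.image (fun x => φ (pt x)),
          (δ * pmass μ (fun x => φ (pt x)) v + √α * √(pmass μ (fun x => φ (pt x)) v)) :=
        Finset.sum_le_sum fun v _ => pmass_mul_sup'_le hC hμ.1 hrange hφ hbdd hα hmc' v
    _ = δ * ∑ v ∈ univ.image (fun x => φ (pt x)), pmass μ (fun x => φ (pt x)) v +
          √α * ∑ v ∈ univ.image (fun x => φ (pt x)), √(pmass μ (fun x => φ (pt x)) v) := by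
        rw [Finset.sum_add_distrib, Finset.mul_sum, Finset.mul_sum]
    _ ≤ δ + √α * √k := by
        rw [sum_pmass_image hμ, mul_one]
        gcongr
        exact sum_sqrt_pmass_le hμ hk

end Coarsening

section Bucketing

variable {m : ℕ} {t : ℝ}

theorem abs_sub_bucketed_le (hm : m ≠ 0) (ht : t ≤ 1) : |t - bucketed m t| ≤ 1 / m := by
  have hm' : (0:ℝ) < m := by positivity
  unfold bucketed
  split_ifs with hc
  · rw [abs_le]; constructor <;> linarith
  · have hlt := Int.lt_floor_add_one (t * m)
    rw [abs_sub_comm, abs_of_nonneg (sub_nonneg.mpr ((le_div_iff₀ hm').mpr hlt.le)),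
      sub_le_iff_le_add']
    calc ((⌊t * m⌋ : ℝ) + 1) / m ≤ (t * m + 1) / m := by gcongr; exact Int.floor_le _
      _ = t + 1 / m := by field_simp

theorem bucketed_mem_image_Icc (hm : m ≠ 0) (ht : 0 ≤ t) :
    bucketed m t ∈ (Finset.Icc 1 m).image fun j : ℕ => (j : ℝ) / m := by
  have hm' : (0:ℝ) < m := by positivity
  unfold bucketed
  split_ifs with hc
  · exact Finset.mem_image.mpr ⟨m, Finset.mem_Icc.mpr ⟨Nat.one_le_iff_ne_zero.mpr hm, le_rfl⟩,
      div_self hm'.ne'⟩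
  · have htm : 0 ≤ t * m := by positivity
    have hlt : t * m < m - 1 := by
      have := mul_lt_mul_of_pos_right (lt_of_not_ge hc) hm'
      rwa [sub_mul, one_div_mul_cancel hm'.ne', one_mul] at this
    have hj : (⌊t * m⌋₊ : ℝ) + 1 ≤ m := by linarith [Nat.floor_le htm]
    refine Finset.mem_image.mpr ⟨⌊t * m⌋₊ + 1, Finset.mem_Icc.mpr ⟨le_add_self, ?_⟩, ?_⟩
    · exact_mod_cast hj
    · rw [← Int.natCast_floor_eq_floor htm]
      push_cast
      rfl

theorem card_image_bucketed_le {ι : Type*} (hm : m ≠ 0) (s : Finset ι)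
    {f : ι → ℝ} (hf : ∀ i ∈ s, 0 ≤ f i) : (s.image fun i => bucketed m (f i)).card ≤ m :=
  calc (s.image fun i => bucketed m (f i)).card
      ≤ ((Finset.Icc 1 m).image fun j : ℕ => (j : ℝ) / m).card :=
        Finset.card_le_card fun _ hv =>
          let ⟨i, hi, hv⟩ := Finset.mem_image.mp hv
          hv ▸ bucketed_mem_image_Icc hm (hf i hi)
    _ ≤ (Finset.Icc 1 m).card := Finset.card_image_le
    _ = m := by simp

end Bucketing

theorem bucketing_gives_swapMC_general [Fintype X]
    (μ : X → Bool → ℝ) (hμ : IsProb μ)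
    (pt : X → ℝ) (hrange : ∀ x, pt x ∈ Set.Icc (0:ℝ) 1)
    (C : Finset (X → ℝ)) (hC : C.Nonempty)
    (hbdd : ∀ c ∈ C, ∀ x, |c x| ≤ 1)
    (α : ℝ)
    (hmc : C.sup' hC (fun c => VExp μ pt (fun v =>
      |CExp μ pt v (fun x y => c x * (yval y - v))|)) ≤ α)
    (δ : ℝ) (m : ℕ) (hm : (m : ℝ) * δ = 1) :
    (VExp μ (fun x => bucketed m (pt x)) (fun v => C.sup' hC (fun c =>
        |CExp μ (fun x => bucketed m (pt x)) v (fun x y => c x * (yval y - v))|)) ≤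
      2 * Real.sqrt (α / δ) + δ)
    ∧ ∀ x, |pt x - bucketed m (pt x)| ≤ δ := by
  have hm0 : m ≠ 0 := Nat.cast_ne_zero.mp (left_ne_zero_of_mul_eq_one hm)
  have hδ : δ = 1 / m := eq_one_div_of_mul_eq_one_right hm
  have hclose : ∀ x, |pt x - bucketed m (pt x)| ≤ δ :=
    fun x => hδ ▸ abs_sub_bucketed_le hm0 (hrange x).2
  refine ⟨?_, hclose⟩
  calc _ ≤ δ + √(α * m) := swapMC_of_coarsening hC hμ hrange hclose hbdd hmc
          (card_image_bucketed_le hm0 univ fun x _ => (hrange x).1)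
    _ = √(α / δ) + δ := by rw [hδ, one_div, div_inv_eq_mul, add_comm]
    _ ≤ 2 * √(α / δ) + δ := by linarith [Real.sqrt_nonneg (α / δ)]

/-- discretizing a `(C,α)`-multicalibrated predictor into buckets of
width `δ = 1/m` yields a `(C, 2√(α/δ) + δ)`-swap multicalibrated predictor that is
pointwise `δ`-close to the original. -/
theorem bucketing_gives_swapMC [Fintype X]
    (μ : X → Bool → ℝ) (hμ : IsProb μ)
    (pt : X → ℝ) (hrange : ∀ x, pt x ∈ Set.Icc (0:ℝ) 1)
    (hpos : ∀ x : X, 0 < pmass μ pt (pt x))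
    (C : Finset (X → ℝ)) (hC : C.Nonempty)
    (hbdd : ∀ c ∈ C, ∀ x, |c x| ≤ 1)
    (α : ℝ)
    (hmc : C.sup' hC (fun c => VExp μ pt (fun v =>
      |CExp μ pt v (fun x y => c x * (yval y - v))|)) ≤ α)
    (δ : ℝ) (hδ : 0 < δ) (hδ1 : δ ≤ 1) (m : ℕ) (hm : (m : ℝ) * δ = 1) :
    (VExp μ (fun x => bucketed m (pt x)) (fun v => C.sup' hC (fun c =>
        |CExp μ (fun x => bucketed m (pt x)) v (fun x y => c x * (yval y - v))|)) ≤
      2 * Real.sqrt (α / δ) + δ)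
    ∧ ∀ x, |pt x - bucketed m (pt x)| ≤ δ :=
  bucketing_gives_swapMC_general μ hμ pt hrange C hC hbdd α hmc δ m hm
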